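/- Let n ≥ 2, let Λ₁, Λ₂ ⊂ ℝⁿ with Λ_k convex, and let Φ₁, Φ₂ : ℝⁿ → ℝ be C² on neighbourhoods of Λ₁, Λ₂ with sup_{Λ_k}|∇Φ_k| and ‖∇²Φ_k‖_{L^∞(Λ_k)} finite. Suppose condition (A1) holds with constant D₁ > 0: for every {j,k} = {1,2}, every 𝔥 ∈ ℝ × ℝⁿ, all ξ, ξ' ∈ Σ_j(𝔥), and every η ∈ Λ_k, |(∇Φ_j(ξ) − ∇Φ_j(ξ')) ∧ (∇Φ_j(ξ) − ∇Φ_k(η))| ≥ D₁|ξ − ξ'|; and suppose in addition the transversality bound ‖∇²Φ_k‖_{L^∞(Λ_k)} · |∇Φ_k(ξ) − ∇Φ_j(η)| ≥ D₁ for all ξ ∈ Σ_k(𝔥) and η ∈ Λ_j. Fix 𝔥 ∈ ℝ × ℝⁿ and {j,k} = {1,2}, and define the conic hypersurface 𝒞_k(𝔥) := {(r, −r ∇Φ_k(ξ)) ∈ ℝ^{1+n} : r ∈ ℝ, ξ ∈ Σ_k(𝔥)}. Then for every η ∈ Λ_j and all p, q ∈ 𝒞_k(𝔥), (1 + sup_{Λ_k}|∇Φ_k|)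 · ‖∇²Φ_k‖_{L^∞(Λ_k)} · |(p − q) ∧ (1, −∇Φ_j(η))| ≥ D₁ |p − q|. -/

import Mathlib

open MeasureTheory Filter
open scoped ENNReal RealInnerProductSpace FourierTransform

noncomputable section

abbrev Euc (n : ℕ) : Type := EuclideanSpace ℝ (Fin n)

/-- The wedge (cross-product magnitude) `|x ∧ y| = (|x|²|y|² − (x·y)²)^{1/2}`. -/
def wedge {F : Type*} [NormedAddCommGroup F] [InnerProductSpace ℝ F] (x y : F) : ℝ :=
  Real.sqrt (‖x‖ ^ 2 * ‖y‖ ^ 2 - ⟪x, y⟫ ^ 2)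

/-- The surface `Σ_j(𝔥) = {ξ ∈ Λ_j ∩ (Λ_k + h) : Φ_j(ξ) = Φ_k(ξ − h) + a}`. -/
def SigmaSet {n : ℕ} (Λj Λk : Set (Euc n)) (Φj Φk : Euc n → ℝ) (a : ℝ) (h : Euc n) :
    Set (Euc n) :=
  {ξ | ξ ∈ Λj ∧ ξ - h ∈ Λk ∧ Φj ξ = Φk (ξ - h) + a}

/-- Condition (A1) for the ordered pair `(j, k)`. -/
def CondA1 {n : ℕ} (Λj Λk : Set (Euc n)) (Φj Φk : Euc n → ℝ) (D₁ : ℝ) : Prop :=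
  ∀ (a : ℝ) (h : Euc n), ∀ ξ ∈ SigmaSet Λj Λk Φj Φk a h, ∀ ξ' ∈ SigmaSet Λj Λk Φj Φk a h,
    ∀ η ∈ Λk,
      D₁ * ‖ξ - ξ'‖ ≤
        wedge (gradient Φj ξ - gradient Φj ξ') (gradient Φj ξ - gradient Φk η)

/-- Condition (A2): `Φ` is `C^N` on a neighbourhood of `Λ` with all derivatives of order
`1 ≤ i ≤ N` bounded by `D₂` on `Λ`. -/
def CondA2 {n : ℕ} (N : ℕ) (Λ : Set (Euc n)) (Φ : Euc n → ℝ) (D₂ : ℝ) : Prop :=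
  ∃ U : Set (Euc n), IsOpen U ∧ Λ ⊆ U ∧ ContDiffOn ℝ N Φ U ∧
    ∀ i : ℕ, 1 ≤ i → i ≤ N → ∀ ξ ∈ Λ, ‖iteratedFDeriv ℝ i Φ ξ‖ ≤ D₂

/-- Assumption A on `(Λ₁, Λ₂)` with constants `D₁, D₂, N`. -/
def AssumptionA {n : ℕ} (N : ℕ) (D₁ D₂ : ℝ) (Λ₁ Λ₂ : Set (Euc n)) (Φ₁ Φ₂ : Euc n → ℝ) :
    Prop :=
  CondA1 Λ₁ Λ₂ Φ₁ Φ₂ D₁ ∧ CondA1 Λ₂ Λ₁ Φ₂ Φ₁ D₁ ∧ CondA2 N Λ₁ Φ₁ D₂ ∧ CondA2 N Λ₂ Φ₂ D₂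

/-- The annulus `{1/16 ≤ |ξ| ≤ 16}`. -/
def Annulus (n : ℕ) : Set (Euc n) := {ξ | 1 / 16 ≤ ‖ξ‖ ∧ ‖ξ‖ ≤ 16}

/-- The vector `(r, w) ∈ ℝ^{1+n}` with the Euclidean (`L²`) norm. -/
def mk1 {n : ℕ} (r : ℝ) (w : Euc n) : WithLp 2 (ℝ × Euc n) :=
  (WithLp.equiv 2 (ℝ × Euc n)).symm (r, w)

/-! Since `|u ∧ v| = ‖u‖ · dist(v, ℝ u)`, it suffices to bound `‖v - t u‖` from below uniformly
in `t`, for `u = p - q` and `v = (1, -∇Φ₁(η))`. Writing `v - t u = (m, z)`, the vector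
`z + m ∇Φ₂(ξ')` lies on the line `ℓ = ∇Φ₂(ξ) - ∇Φ₁(η) + ℝ (∇Φ₂(ξ) - ∇Φ₂(ξ'))`, and its norm is at
most `(1 + G₂) ‖(m, z)‖`. The line `ℓ` stays at distance `D₁ / H₂` from the origin: by (A1) the
wedge of its direction with its base point is at least `D₁ |ξ - ξ'|`, while the Hessian bound on
the convex set `Λ₂` makes `∇Φ₂` `H₂`-Lipschitz, so the direction has length at most `H₂ |ξ - ξ'|`;
the transversality bound covers the degenerate direction `0`. -/

section Wedge

variable {F : Type*} [NormedAddCommGroup F] [InnerProductSpace ℝ F]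

lemma wedge_nonneg (x y : F) : 0 ≤ wedge x y := Real.sqrt_nonneg _

lemma wedge_add_smul_right (x y : F) (t : ℝ) : wedge x (y + t • x) = wedge x y := by
  unfold wedge
  congr 1
  simp only [← real_inner_self_eq_norm_sq, inner_add_left, inner_add_right,
    real_inner_smul_left, real_inner_smul_right, real_inner_comm y x]
  ring

lemma wedge_le_norm_mul_norm (x y : F) : wedge x y ≤ ‖x‖ * ‖y‖ := by
  rw [wedge, ← Real.sqrt_sq (by positivity : 0 ≤ ‖x‖ * ‖y‖)]
  exact Real.sqrt_le_sqrt (by nlinarith [sq_nonneg ⟪x, y⟫])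

lemma wedge_eq_norm_mul_norm_sub_smul {x : F} (hx : x ≠ 0) (y : F) :
    wedge x y = ‖x‖ * ‖y - (⟪x, y⟫ / ‖x‖ ^ 2) • x‖ := by
  set t := ⟪x, y⟫ / ‖x‖ ^ 2 with ht
  have hexp : ‖y - t • x‖ ^ 2 = ‖y‖ ^ 2 - 2 * (t * ⟪x, y⟫) + t ^ 2 * ‖x‖ ^ 2 := by
    simp only [← real_inner_self_eq_norm_sq, inner_sub_left, inner_sub_right,
      real_inner_smul_left, real_inner_smul_right, real_inner_comm y x]
    ring
  have hsq : ‖x‖ ^ 2 * ‖y‖ ^ 2 - ⟪x, y⟫ ^ 2 = (‖x‖ * ‖y - t • x‖) ^ 2 := by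
    rw [mul_pow, hexp, ht]
    field_simp
    ring
  rw [wedge, hsq, Real.sqrt_sq (by positivity)]

lemma mul_norm_le_mul_wedge {x y : F} {c K : ℝ} (hK : 0 ≤ K)
    (h : ∀ t : ℝ, c ≤ K * ‖y - t • x‖) : c * ‖x‖ ≤ K * wedge x y := by
  rcases eq_or_ne x 0 with rfl | hx
  · simpa using mul_nonneg hK (wedge_nonneg 0 y)
  · rw [wedge_eq_norm_mul_norm_sub_smul hx, mul_left_comm]
    exact (mul_le_mul_of_nonneg_right (h _) (norm_nonneg x)).trans_eq (mul_comm _ _)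

lemma le_mul_norm_add_smul_of_le_wedge {d e : F} {D H δ : ℝ} (hD : 0 ≤ D) (hH : 0 ≤ H)
    (he : D ≤ H * ‖e‖) (hd : ‖d‖ ≤ H * δ) (hde : D * δ ≤ wedge d e) (t : ℝ) :
    D ≤ H * ‖e + t • d‖ := by
  rcases eq_or_ne d 0 with rfl | hd0
  · simpa using he
  refine le_of_mul_le_mul_right ?_ (norm_pos_iff.mpr hd0)
  calc D * ‖d‖ ≤ D * (H * δ) := mul_le_mul_of_nonneg_left hd hD
    _ = H * (D * δ) := by ring
    _ ≤ H * wedge d (e + t • d) := by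
        rw [wedge_add_smul_right]; exact mul_le_mul_of_nonneg_left hde hH
    _ ≤ H * (‖d‖ * ‖e + t • d‖) := mul_le_mul_of_nonneg_left (wedge_le_norm_mul_norm _ _) hH
    _ = H * ‖e + t • d‖ * ‖d‖ := by ring

end Wedge

lemma norm_add_smul_le_mul_norm_mk1 {n : ℕ} {y : Euc n} {G : ℝ} (hy : ‖y‖ ≤ G) (m : ℝ)
    (z : Euc n) : ‖z + m • y‖ ≤ (1 + G) * ‖mk1 m z‖ := by
  have hz : ‖z‖ ≤ ‖mk1 m z‖ := WithLp.norm_snd_le ℝ (mk1 m z)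
  have hm : |m| ≤ ‖mk1 m z‖ := WithLp.norm_fst_le ℝ (mk1 m z)
  have hG : 0 ≤ G := (norm_nonneg y).trans hy
  calc ‖z + m • y‖ ≤ ‖z‖ + |m| * ‖y‖ := by
        rw [← Real.norm_eq_abs, ← norm_smul]; exact norm_add_le _ _
    _ ≤ ‖mk1 m z‖ + ‖mk1 m z‖ * G := by gcongr
    _ = (1 + G) * ‖mk1 m z‖ := by ring

lemma ContDiffOn.differentiableAt_gradient {E : Type*} [NormedAddCommGroup E]
    [InnerProductSpace ℝ E] [CompleteSpace E] {f : E → ℝ} {U : Set E} {x : E}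
    (hf : ContDiffOn ℝ 2 f U) (hU : IsOpen U) (hx : x ∈ U) :
    DifferentiableAt ℝ (gradient f) x := by
  have hf' : DifferentiableAt ℝ (fderiv ℝ f) x :=
    ((hf.fderiv_of_isOpen hU (by norm_num : (1 : WithTop ℕ∞) + 1 ≤ 2)).differentiableOn
      one_ne_zero).differentiableAt (hU.mem_nhds hx)
  exact (InnerProductSpace.toDual ℝ E).symm.differentiable.differentiableAt.comp x hf'

lemma Convex.norm_gradient_sub_le {E : Type*} [NormedAddCommGroup E] [InnerProductSpace ℝ E]
    [CompleteSpace E] {f : E → ℝ} {Λ U : Set E} {H : ℝ} (hΛ : Convex ℝ Λ) (hU : IsOpen U)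
    (hΛU : Λ ⊆ U) (hf : ContDiffOn ℝ 2 f U) (hH : ∀ x ∈ Λ, ‖fderiv ℝ (gradient f) x‖ ≤ H)
    {x y : E} (hx : x ∈ Λ) (hy : y ∈ Λ) :
    ‖gradient f x - gradient f y‖ ≤ H * ‖x - y‖ :=
  hΛ.norm_image_sub_le_of_norm_hasFDerivWithin_le
    (fun _ hz => (hf.differentiableAt_gradient hU (hΛU hz)).hasFDerivAt.hasFDerivWithinAt)
    hH hy hx

theorem stmt10_general {n : ℕ} (Λ₁ Λ₂ : Set (Euc n)) (hc₂ : Convex ℝ Λ₂)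
    (Φ₁ Φ₂ : Euc n → ℝ)
    (hU₂ : ∃ U : Set (Euc n), IsOpen U ∧ Λ₂ ⊆ U ∧ ContDiffOn ℝ 2 Φ₂ U)
    (G₂ H₂ : ℝ)
    (hG₂ : ∀ ξ ∈ Λ₂, ‖gradient Φ₂ ξ‖ ≤ G₂)
    (hH₂ : ∀ ξ ∈ Λ₂, ‖fderiv ℝ (gradient Φ₂) ξ‖ ≤ H₂)
    (D₁ : ℝ) (hD₁ : 0 < D₁)
    (hA1' : CondA1 Λ₂ Λ₁ Φ₂ Φ₁ D₁)
    (htrans : ∀ (a : ℝ) (h : Euc n), ∀ ξ ∈ SigmaSet Λ₂ Λ₁ Φ₂ Φ₁ a h, ∀ η ∈ Λ₁,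
      D₁ ≤ H₂ * ‖gradient Φ₂ ξ - gradient Φ₁ η‖)
    (a : ℝ) (h : Euc n) :
    ∀ η ∈ Λ₁, ∀ (r r' : ℝ) (ξ ξ' : Euc n),
      ξ ∈ SigmaSet Λ₂ Λ₁ Φ₂ Φ₁ a h → ξ' ∈ SigmaSet Λ₂ Λ₁ Φ₂ Φ₁ a h →
      D₁ * ‖mk1 r (-(r • gradient Φ₂ ξ)) - mk1 r' (-(r' • gradient Φ₂ ξ'))‖ ≤
        (1 + G₂) * H₂ *
          wedge (mk1 r (-(r • gradient Φ₂ ξ)) - mk1 r' (-(r' • gradient Φ₂ ξ')))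
            (mk1 1 (-(gradient Φ₁ η))) := by
  obtain ⟨U, hU, hΛU, hΦ₂⟩ := hU₂
  intro η hη r r' ξ ξ' hξ hξ'
  set g := gradient Φ₂ ξ
  set g' := gradient Φ₂ ξ'
  set w := gradient Φ₁ η
  have hgw : D₁ ≤ H₂ * ‖g - w‖ := htrans a h ξ hξ η hη
  have hH : 0 < H₂ := pos_of_mul_pos_left (hD₁.trans_le hgw) (norm_nonneg _)
  have hG : 0 ≤ G₂ := (norm_nonneg g).trans (hG₂ ξ hξ.1)
  have hline (s : ℝ) : D₁ ≤ H₂ * ‖(g - w) + s • (g - g')‖ :=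
    le_mul_norm_add_smul_of_le_wedge hD₁.le hH.le hgw
      (hc₂.norm_gradient_sub_le hU hΛU hΦ₂ hH₂ hξ.1 hξ'.1) (hA1' a h ξ hξ ξ' hξ' η hη) s
  refine mul_norm_le_mul_wedge (by positivity) fun t => ?_
  -- `(1, -w) - t (p - q)` is `(m, z)`, and `z + m g'` lies on the line `(g - w) + ℝ (g - g')`.
  set m := 1 - t * (r - r')
  set z := -w - t • (-(r • g) - -(r' • g'))
  calc D₁ ≤ H₂ * ‖(g - w) + (t * r - 1) • (g - g')‖ := hline _
    _ = H₂ * ‖z + m • g'‖ := by congr 2; module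
    _ ≤ H₂ * ((1 + G₂) * ‖mk1 m z‖) :=
        mul_le_mul_of_nonneg_left (norm_add_smul_le_mul_norm_mk1 (hG₂ ξ' hξ'.1) m z) hH.le
    _ = (1 + G₂) * H₂ * ‖mk1 m z‖ := by ring

/-- **Lemma 2.6: transversality of `(1, −∇Φ_j(η))` to the conic surface `𝒞_k(𝔥)`.**
Here we take `(j, k) = (1, 2)`; `G₂` bounds `sup_{Λ₂}|∇Φ₂|` and `H₂` bounds
`‖∇²Φ₂‖_{L^∞(Λ₂)}`.  Points of `𝒞₂(𝔥)` are written as `(r, −r∇Φ₂(ξ))` with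
`ξ ∈ Σ₂(𝔥)`. -/
theorem stmt10 {n : ℕ} (hn : 2 ≤ n) (Λ₁ Λ₂ : Set (Euc n)) (hc₂ : Convex ℝ Λ₂)
    (Φ₁ Φ₂ : Euc n → ℝ)
    (hU₁ : ∃ U : Set (Euc n), IsOpen U ∧ Λ₁ ⊆ U ∧ ContDiffOn ℝ 2 Φ₁ U)
    (hU₂ : ∃ U : Set (Euc n), IsOpen U ∧ Λ₂ ⊆ U ∧ ContDiffOn ℝ 2 Φ₂ U)
    (G₂ H₂ : ℝ)
    (hG₂ : ∀ ξ ∈ Λ₂, ‖gradient Φ₂ ξ‖ ≤ G₂)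
    (hH₂ : ∀ ξ ∈ Λ₂, ‖fderiv ℝ (gradient Φ₂) ξ‖ ≤ H₂)
    (D₁ : ℝ) (hD₁ : 0 < D₁)
    (hA1 : CondA1 Λ₁ Λ₂ Φ₁ Φ₂ D₁) (hA1' : CondA1 Λ₂ Λ₁ Φ₂ Φ₁ D₁)
    (htrans : ∀ (a : ℝ) (h : Euc n), ∀ ξ ∈ SigmaSet Λ₂ Λ₁ Φ₂ Φ₁ a h, ∀ η ∈ Λ₁,
      D₁ ≤ H₂ * ‖gradient Φ₂ ξ - gradient Φ₁ η‖)
    (a : ℝ) (h : Euc n) :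
    ∀ η ∈ Λ₁, ∀ (r r' : ℝ) (ξ ξ' : Euc n),
      ξ ∈ SigmaSet Λ₂ Λ₁ Φ₂ Φ₁ a h → ξ' ∈ SigmaSet Λ₂ Λ₁ Φ₂ Φ₁ a h →
      D₁ * ‖mk1 r (-(r • gradient Φ₂ ξ)) - mk1 r' (-(r' • gradient Φ₂ ξ'))‖ ≤
        (1 + G₂) * H₂ *
          wedge (mk1 r (-(r • gradient Φ₂ ξ)) - mk1 r' (-(r' • gradient Φ₂ ξ')))
            (mk1 1 (-(gradient Φ₁ η))) :=
  stmt10_general Λ₁ Λ₂ hc₂ Φ₁ Φ₂ hU₂ G₂ H₂ hG₂ hH₂ D₁ hD₁ hA1' htrans a h
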